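/- Let (E,ℰ) be a measurable space and let (P_μ)_{μ∈𝒫(E)} be a nonlinear Markov chain satisfying conditions (C1), (C2) and (C3). Then for every initial distribution μ₀ ∈ 𝒫(E), the sequence of marginal distributions (μ_n)_{n∈ℕ} is a Cauchy sequence in the complete metric space (𝒫(E), ‖·‖_TV); in particular there exists π ∈ 𝒫(E) with ‖μ_n − π‖_TV → 0. -/

import Mathlib

open MeasureTheory ProbabilityTheory

/-- Total variation distance `‖μ − ν‖_TV = 2 sup_{A ∈ ℰ} |μ(A) − ν(A)|`. -/
noncomputable def tvDist {E : Type*} [MeasurableSpace E] (μ ν : Measure E) : ℝ :=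
  2 * ⨆ A : {s : Set E // MeasurableSet s}, |(μ A).toReal - (ν A).toReal|

/-- One step of the nonlinear chain: `μ ↦ μ P_μ`, `(νP_μ)(B) = ∫ P_μ(x,B) ν(dx)`. -/
noncomputable def stepMeasure {E : Type*} [MeasurableSpace E]
    (P : Measure E → Kernel E E) (μ : Measure E) : Measure E :=
  μ.bind (fun x => P μ x)

/-- Two-step transition kernel `Q_μ(x,B) = ∫ P_μ(x,dy) P_{μP_μ}(y,B)`. -/
noncomputable def twoStepKernel {E : Type*} [MeasurableSpace E]
    (P : Measure E → Kernel E E) (μ : Measure E) (x : E) : Measure E :=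
  (P μ x).bind (fun y => P (stepMeasure P μ) y)

/-- Marginal distributions `μ_{n+1} = μ_n P_{μ_n}` of the nonlinear Markov chain. -/
noncomputable def marginal {E : Type*} [MeasurableSpace E]
    (P : Measure E → Kernel E E) (μ0 : Measure E) : ℕ → Measure E
  | 0 => μ0
  | n + 1 => stepMeasure P (marginal P μ0 n)

/-!
Write `μ = ρ + ξ` and `ν = ρ + η`, where `ρ` is the common part of two probability measures and
`ξ ⟂ₘ η` both have mass `m = ‖μ - ν‖_TV / 2` (Hahn decomposition). Under two steps of the chain
the common part is moved by at most `λ₂ m` per unit of mass (C2) and the excesses by at most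
`1 - α₂` (C1), so `d = ‖μ_a - μ_b‖_TV` becomes at most `d - α₂ d² / 2`; this recursion forces
`d ≤ 2 / (1 + α₂ k)` after `2k` steps. Hence the marginals are Cauchy in total variation and
converge uniformly on measurable sets. The limit set function is finitely additive and, as a uniform
limit of measures, continuous at `∅`, hence a probability measure.
-/

open Filter Topology Set Function
open scoped ENNReal

section TotalVariation

variable {E : Type*} [MeasurableSpace E]

lemma tvDist_eq_two_mul_iSup_measureReal (μ ν : Measure E) :
    tvDist μ ν = 2 * ⨆ A : {s : Set E // MeasurableSet s}, |μ.real A - ν.real A| := rfl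

lemma tvDist_comm (μ ν : Measure E) : tvDist μ ν = tvDist ν μ := by
  simp only [tvDist_eq_two_mul_iSup_measureReal, abs_sub_comm]

lemma tvDist_nonneg (μ ν : Measure E) : 0 ≤ tvDist μ ν :=
  mul_nonneg zero_le_two (Real.iSup_nonneg fun _ => abs_nonneg _)

lemma abs_measureReal_sub_le_half_tvDist (μ ν : Measure E) [IsFiniteMeasure μ]
    [IsFiniteMeasure ν] {A : Set E} (hA : MeasurableSet A) :
    |μ.real A - ν.real A| ≤ tvDist μ ν / 2 := by
  have hbdd : BddAbove (range fun B : {s : Set E // MeasurableSet s} => |μ.real B - ν.real B|) :=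
    ⟨μ.real univ + ν.real univ, by
      rintro _ ⟨B, rfl⟩
      exact abs_sub_le_of_nonneg_of_le measureReal_nonneg
        (le_add_of_le_of_nonneg (measureReal_mono (subset_univ _)) measureReal_nonneg)
        measureReal_nonneg
        (le_add_of_nonneg_of_le measureReal_nonneg (measureReal_mono (subset_univ _)))⟩
  rw [tvDist_eq_two_mul_iSup_measureReal]
  linarith [le_ciSup hbdd ⟨A, hA⟩]

lemma tvDist_le_of_forall_abs_measureReal_sub_le {μ ν : Measure E} {c : ℝ}
    (h : ∀ A, MeasurableSet A → |μ.real A - ν.real A| ≤ c) : tvDist μ ν ≤ 2 * c := by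
  have : Nonempty {s : Set E // MeasurableSet s} := ⟨⟨∅, .empty⟩⟩
  rw [tvDist_eq_two_mul_iSup_measureReal]
  linarith [ciSup_le fun A : {s : Set E // MeasurableSet s} => h A A.2]

lemma tvDist_le_two (μ ν : Measure E) [IsProbabilityMeasure μ] [IsProbabilityMeasure ν] :
    tvDist μ ν ≤ 2 := by
  simpa using tvDist_le_of_forall_abs_measureReal_sub_le (μ := μ) (ν := ν) (c := 1)
    fun A _ => abs_sub_le_of_nonneg_of_le measureReal_nonneg measureReal_le_one
      measureReal_nonneg measureReal_le_one

lemma apply_le_add_ofReal_of_tvDist_le {μ ν : Measure E} [IsFiniteMeasure μ]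
    [IsFiniteMeasure ν] {c : ℝ} (h : tvDist μ ν ≤ 2 * c) {A : Set E} (hA : MeasurableSet A) :
    μ A ≤ ν A + ENNReal.ofReal c := by
  have hle : μ.real A ≤ ν.real A + c := by
    linarith [(abs_le.mp (abs_measureReal_sub_le_half_tvDist μ ν hA)).2]
  calc μ A = ENNReal.ofReal (μ.real A) := (ofReal_measureReal (measure_ne_top _ _)).symm
    _ ≤ ENNReal.ofReal (ν.real A + c) := ENNReal.ofReal_le_ofReal hle
    _ ≤ ENNReal.ofReal (ν.real A) + ENNReal.ofReal c := ENNReal.ofReal_add_le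
    _ = ν A + ENNReal.ofReal c := by rw [ofReal_measureReal (measure_ne_top _ _)]

end TotalVariation

section Decomposition

variable {E : Type*} [MeasurableSpace E]

lemma restrict_le_restrict_of_forall_le {μ ν : Measure E} {S : Set E} (hS : MeasurableSet S)
    (h : ∀ t, MeasurableSet t → t ⊆ S → ν t ≤ μ t) : ν.restrict S ≤ μ.restrict S :=
  Measure.le_iff.2 fun t ht => by
    rw [Measure.restrict_apply ht, Measure.restrict_apply ht]
    exact h _ (ht.inter hS) inter_subset_right

lemma exists_eq_add_add_mutuallySingular (μ ν : Measure E) [IsFiniteMeasure μ]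
    [IsFiniteMeasure ν] :
    ∃ ρ ξ η : Measure E, IsFiniteMeasure ρ ∧ IsFiniteMeasure ξ ∧ IsFiniteMeasure η ∧
      μ = ρ + ξ ∧ ν = ρ + η ∧ ξ ⟂ₘ η := by
  obtain ⟨S, hS, hνμ, hμν⟩ := hahn_decomposition μ ν
  have hle : ν.restrict S ≤ μ.restrict S := restrict_le_restrict_of_forall_le hS hνμ
  have hle' : μ.restrict Sᶜ ≤ ν.restrict Sᶜ := restrict_le_restrict_of_forall_le hS.compl hμν
  refine ⟨ν.restrict S + μ.restrict Sᶜ, μ.restrict S - ν.restrict S,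
    ν.restrict Sᶜ - μ.restrict Sᶜ, inferInstance, inferInstance, inferInstance, ?_, ?_, ?_⟩
  · conv_lhs => rw [← Measure.restrict_add_restrict_compl (μ := μ) hS,
      ← Measure.sub_add_cancel_of_le hle]
    ac_rfl
  · conv_lhs => rw [← Measure.restrict_add_restrict_compl (μ := ν) hS,
      ← Measure.sub_add_cancel_of_le hle']
    ac_rfl
  · have hsing : μ.restrict S ⟂ₘ ν.restrict Sᶜ :=
      ⟨Sᶜ, hS.compl, by simp [Measure.restrict_apply hS.compl],
        by simp [Measure.restrict_apply hS]⟩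
    exact hsing.mono Measure.sub_le Measure.sub_le

lemma tvDist_add_add_of_mutuallySingular {ρ ξ η : Measure E} [IsFiniteMeasure ρ]
    [IsFiniteMeasure ξ] [IsFiniteMeasure η] (hξη : ξ ⟂ₘ η) (hmass : ξ univ = η univ) :
    tvDist (ρ + ξ) (ρ + η) = 2 * ξ.real univ := by
  have hsub : ∀ A, (ρ + ξ).real A - (ρ + η).real A = ξ.real A - η.real A := fun A => by
    rw [measureReal_add_apply, measureReal_add_apply]; ring
  have hmass' : η.real univ = ξ.real univ := by simp only [Measure.real, hmass]
  refine le_antisymm (tvDist_le_of_forall_abs_measureReal_sub_le fun A _ => ?_) ?_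
  · rw [hsub]
    exact abs_sub_le_of_nonneg_of_le measureReal_nonneg (measureReal_mono (subset_univ _))
      measureReal_nonneg (hmass' ▸ measureReal_mono (subset_univ _))
  · obtain ⟨S, hS, hξS, hηS⟩ := hξη
    have hξSc : ξ.real Sᶜ = ξ.real univ := by
      rw [measureReal_compl hS, measureReal_def ξ S, hξS, ENNReal.toReal_zero, sub_zero]
    have := abs_measureReal_sub_le_half_tvDist (ρ + ξ) (ρ + η) hS.compl
    rw [hsub, hξSc, measureReal_def η, hηS, ENNReal.toReal_zero, sub_zero,
      abs_of_nonneg measureReal_nonneg] at this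
    linarith

end Decomposition

section Bind

variable {E : Type*} [MeasurableSpace E]

lemma lintegral_le_lintegral_add_mul_of_le_add (ρ : Measure E) {f g : E → ℝ≥0∞} {c : ℝ≥0∞}
    (h : ∀ x, f x ≤ g x + c) : ∫⁻ x, f x ∂ρ ≤ ∫⁻ x, g x ∂ρ + c * ρ univ :=
  calc ∫⁻ x, f x ∂ρ ≤ ∫⁻ x, g x + c ∂ρ := lintegral_mono h
    _ = ∫⁻ x, g x ∂ρ + c * ρ univ := by rw [lintegral_add_right _ measurable_const, lintegral_const]

lemma lintegral_le_lintegral_add_mul_of_forall_le_add {ξ η : Measure E} (hmass : ξ univ = η univ)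
    {f g : E → ℝ≥0∞} {c : ℝ≥0∞} (h : ∀ x y, f x ≤ g y + c) :
    ∫⁻ x, f x ∂ξ ≤ ∫⁻ y, g y ∂η + c * η univ :=
  calc ∫⁻ x, f x ∂ξ ≤ ∫⁻ _, ⨅ y, g y + c ∂ξ := lintegral_mono fun x => le_iInf (h x)
    _ = ∫⁻ _, ⨅ y, g y + c ∂η := by rw [lintegral_const, lintegral_const, hmass]
    _ ≤ ∫⁻ y, g y + c ∂η := lintegral_mono fun y => iInf_le _ y
    _ = ∫⁻ y, g y ∂η + c * η univ := by rw [lintegral_add_right _ measurable_const, lintegral_const]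

lemma bind_add_apply_le {ρ ξ η : Measure E} (hmass : ξ univ = η univ) {Q Q' : E → Measure E}
    (hQ : Measurable Q) (hQ' : Measurable Q') {A : Set E} (hA : MeasurableSet A) {c₁ c₂ : ℝ≥0∞}
    (h₁ : ∀ x y, Q x A ≤ Q' y A + c₁) (h₂ : ∀ x, Q x A ≤ Q' x A + c₂) :
    (ρ + ξ).bind Q A ≤ (ρ + η).bind Q' A + (c₂ * ρ univ + c₁ * η univ) := by
  rw [Measure.bind_apply hA hQ.aemeasurable, Measure.bind_apply hA hQ'.aemeasurable,
    lintegral_add_measure, lintegral_add_measure]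
  calc ∫⁻ x, Q x A ∂ρ + ∫⁻ x, Q x A ∂ξ
      ≤ (∫⁻ x, Q' x A ∂ρ + c₂ * ρ univ) + (∫⁻ y, Q' y A ∂η + c₁ * η univ) :=
        add_le_add (lintegral_le_lintegral_add_mul_of_le_add ρ h₂)
          (lintegral_le_lintegral_add_mul_of_forall_le_add hmass h₁)
    _ = _ := by ring

lemma isFiniteMeasure_bind (m : Measure E) [IsFiniteMeasure m] {f : E → Measure E}
    (hf : Measurable f) [∀ x, IsProbabilityMeasure (f x)] : IsFiniteMeasure (m.bind f) :=
  ⟨by simp [Measure.bind_apply MeasurableSet.univ hf.aemeasurable]⟩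

lemma measureReal_bind_add_le {ρ ξ η : Measure E} [IsFiniteMeasure ρ] [IsFiniteMeasure η]
    (hmass : ξ univ = η univ) {Q Q' : E → Measure E} (hQ : Measurable Q) (hQ' : Measurable Q')
    [∀ x, IsProbabilityMeasure (Q x)] [∀ x, IsProbabilityMeasure (Q' x)] {c₁ c₂ : ℝ}
    (hc₁ : 0 ≤ c₁) (hc₂ : 0 ≤ c₂) (h₁ : ∀ x y, tvDist (Q x) (Q' y) ≤ 2 * c₁)
    (h₂ : ∀ x, tvDist (Q x) (Q' x) ≤ 2 * c₂) {A : Set E} (hA : MeasurableSet A) :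
    ((ρ + ξ).bind Q).real A ≤ ((ρ + η).bind Q').real A + (c₂ * ρ.real univ + c₁ * η.real univ) := by
  have := isFiniteMeasure_bind (ρ + η) hQ'
  have hle := bind_add_apply_le (ρ := ρ) hmass hQ hQ' hA
    (fun x y => apply_le_add_ofReal_of_tvDist_le (h₁ x y) hA)
    (fun x => apply_le_add_ofReal_of_tvDist_le (h₂ x) hA)
  have hle' := ENNReal.toReal_mono (by finiteness) hle
  rwa [ENNReal.toReal_add (by finiteness) (by finiteness),
    ENNReal.toReal_add (by finiteness) (by finiteness), ENNReal.toReal_mul, ENNReal.toReal_mul,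
    ENNReal.toReal_ofReal hc₁, ENNReal.toReal_ofReal hc₂] at hle'

end Bind

section Contraction

variable {E : Type*} [MeasurableSpace E]

theorem tvDist_bind_le {μ ν : Measure E} [IsProbabilityMeasure μ] [IsProbabilityMeasure ν]
    {Q Q' : E → Measure E} (hQ : Measurable Q) (hQ' : Measurable Q')
    [∀ x, IsProbabilityMeasure (Q x)] [∀ x, IsProbabilityMeasure (Q' x)] {α lam : ℝ}
    (hα : α ≤ 1) (hlam : 0 ≤ lam) (hlamα : lam ≤ α)
    (h₁ : ∀ x y, tvDist (Q x) (Q' y) ≤ 2 * (1 - α))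
    (h₂ : ∀ x, tvDist (Q x) (Q' x) ≤ lam * tvDist μ ν) :
    tvDist (μ.bind Q) (ν.bind Q') ≤ tvDist μ ν - α / 2 * tvDist μ ν ^ 2 := by
  obtain ⟨ρ, ξ, η, _, _, _, rfl, rfl, hξη⟩ := exists_eq_add_add_mutuallySingular μ ν
  have hmass : ξ univ = η univ := by
    have h := (measure_univ (μ := ρ + ξ)).trans (measure_univ (μ := ρ + η)).symm
    rw [Measure.add_apply, Measure.add_apply] at h
    exact (ENNReal.add_right_inj (measure_ne_top ρ univ)).mp h
  set m := ξ.real univ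
  have hd : tvDist (ρ + ξ) (ρ + η) = 2 * m := tvDist_add_add_of_mutuallySingular hξη hmass
  have hηm : η.real univ = m := by simp only [m, Measure.real, hmass]
  have hρm : ρ.real univ = 1 - m := by
    have h := probReal_univ (μ := ρ + ξ)
    rw [measureReal_add_apply] at h
    linarith
  have hm0 : 0 ≤ m := measureReal_nonneg
  have hm1 : m ≤ 1 := by linarith [tvDist_le_two (ρ + ξ) (ρ + η)]
  have h₂' : ∀ x, tvDist (Q x) (Q' x) ≤ 2 * (lam * m) := fun x => (h₂ x).trans_eq (by rw [hd]; ring)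
  have hbound : ∀ A, MeasurableSet A → |((ρ + ξ).bind Q).real A - ((ρ + η).bind Q').real A| ≤
      lam * m * (1 - m) + (1 - α) * m := fun A hA => by
    have hup :=
      measureReal_bind_add_le (ρ := ρ) hmass hQ hQ' (by linarith) (by positivity) h₁ h₂' hA
    have hlow := measureReal_bind_add_le (ρ := ρ) hmass.symm hQ' hQ (by linarith) (by positivity)
      (fun x y => tvDist_comm (Q' x) (Q y) ▸ h₁ y x)
      (fun x => tvDist_comm (Q' x) (Q x) ▸ h₂' x) hA
    rw [hρm, hηm] at hup
    rw [hρm] at hlow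
    exact abs_le.mpr ⟨by linarith, by linarith⟩
  calc tvDist ((ρ + ξ).bind Q) ((ρ + η).bind Q')
      ≤ 2 * (lam * m * (1 - m) + (1 - α) * m) := tvDist_le_of_forall_abs_measureReal_sub_le hbound
    _ ≤ 2 * m - α / 2 * (2 * m) ^ 2 := by
      nlinarith [mul_nonneg (mul_nonneg hm0 (sub_nonneg.mpr hm1)) (sub_nonneg.mpr hlamα)]
    _ = _ := by rw [hd]

end Contraction

lemma le_two_div_of_le_sub_sq {c : ℝ} (hc0 : 0 ≤ c) (hc1 : c ≤ 1) {x : ℕ → ℝ}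
    (hx2 : x 0 ≤ 2) (hx : ∀ k, x (k + 1) ≤ x k - c / 2 * x k ^ 2) (k : ℕ) :
    x k ≤ 2 / (1 + c * k) := by
  induction k with
  | zero => simpa using hx2
  | succ k ih =>
    have hck : 0 ≤ c * k := by positivity
    rw [le_div_iff₀ (by positivity)] at ih ⊢
    have hxk : x k ≤ 2 := by nlinarith
    have hdec : 0 ≤ 2 - x k * (1 + c * k) := by linarith
    have hcx : 0 ≤ 1 - c * x k / 2 := by nlinarith
    push_cast
    -- `1 / x (k + 1) ≥ 1 / x k + c / 2`, cleared of denominators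
    nlinarith [hx k, mul_nonneg hdec hcx, sq_nonneg (c * x k),
      mul_nonneg (mul_nonneg hc0 hc0) (sq_nonneg (x k))]

section Completeness

variable {E : Type*} [MeasurableSpace E]

lemma exists_tendstoUniformlyOn_measureReal {μ : ℕ → Measure E} [∀ n, IsFiniteMeasure (μ n)]
    (hμ : ∀ ε : ℝ, 0 < ε → ∃ N : ℕ, ∀ m ≥ N, ∀ n ≥ N, tvDist (μ m) (μ n) < ε) :
    ∃ L : Set E → ℝ,
      TendstoUniformlyOn (fun n s => (μ n).real s) L atTop {s | MeasurableSet s} := by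
  have hcauchy : UniformCauchySeqOn (fun n s => (μ n).real s) atTop {s | MeasurableSet s} := by
    refine Metric.uniformCauchySeqOn_iff.mpr fun ε hε => ?_
    obtain ⟨N, hN⟩ := hμ ε hε
    refine ⟨N, fun m hm n hn s hs => ?_⟩
    rw [Real.dist_eq]
    linarith [abs_measureReal_sub_le_half_tvDist (μ m) (μ n) hs, hN m hm n hn,
      tvDist_nonneg (μ m) (μ n)]
  exact ⟨fun s => limUnder atTop fun n => (μ n).real s,
    hcauchy.tendstoUniformlyOn_of_tendsto fun s hs => (hcauchy.cauchySeq hs).tendsto_limUnder⟩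

lemma tendsto_zero_of_tendstoUniformlyOn_measureReal {μ : ℕ → Measure E}
    [∀ n, IsFiniteMeasure (μ n)] {L : Set E → ℝ}
    (hL : TendstoUniformlyOn (fun n s => (μ n).real s) L atTop {s | MeasurableSet s})
    {T : ℕ → Set E} (hT : ∀ N, MeasurableSet (T N)) (hanti : Antitone T) (hempty : ⋂ N, T N = ∅) :
    Tendsto (fun N => L (T N)) atTop (𝓝 0) := by
  have hunif : TendstoUniformly (fun n N => (μ n).real (T N)) (fun N => L (T N)) atTop := by
    have h := hL.comp T
    rwa [show T ⁻¹' {s | MeasurableSet s} = univ from eq_univ_of_forall hT,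
      tendstoUniformlyOn_univ] at h
  refine hunif.tendsto_of_eventually_tendsto (L := fun _ => 0)
    (Eventually.of_forall fun n => ?_) tendsto_const_nhds
  have h := tendsto_measure_iInter_atTop (μ := μ n) (fun N => (hT N).nullMeasurableSet) hanti
    ⟨0, measure_ne_top _ _⟩
  rw [hempty, measure_empty] at h
  exact (ENNReal.tendsto_toReal ENNReal.zero_ne_top).comp h

lemma exists_measure_of_tendstoUniformlyOn {μ : ℕ → Measure E}
    [∀ n, IsProbabilityMeasure (μ n)] {L : Set E → ℝ}
    (hL : TendstoUniformlyOn (fun n s => (μ n).real s) L atTop {s | MeasurableSet s}) :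
    ∃ π : Measure E, IsProbabilityMeasure π ∧ ∀ s, MeasurableSet s → π.real s = L s := by
  have hpt : ∀ s, MeasurableSet s → Tendsto (fun n => (μ n).real s) atTop (𝓝 (L s)) :=
    fun s hs => hL.tendsto_at hs
  have hL0 : ∀ s, MeasurableSet s → 0 ≤ L s := fun s hs =>
    ge_of_tendsto' (hpt s hs) fun _ => measureReal_nonneg
  have hLempty : L ∅ = 0 := tendsto_nhds_unique (hpt ∅ .empty) (by simp)
  have hLuniv : L univ = 1 := tendsto_nhds_unique (hpt univ .univ) (by simp)
  have hLunion : ∀ {s t}, MeasurableSet s → MeasurableSet t → Disjoint s t →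
      L (s ∪ t) = L s + L t := fun hs ht hst =>
    tendsto_nhds_unique (hpt _ (hs.union ht))
      (((hpt _ hs).add (hpt _ ht)).congr fun _ => (measureReal_union hst ht).symm)
  have hring : IsSetRing {s : Set E | MeasurableSet s} :=
    ⟨.empty, fun _ _ hs ht => hs.union ht, fun _ _ hs ht => hs.diff ht⟩
  let m : AddContent ℝ≥0∞ {s : Set E | MeasurableSet s} :=
    hring.addContent_of_union (fun s => ENNReal.ofReal (L s)) (by simp [hLempty])
      fun hs ht hst => by rw [hLunion hs ht hst, ENNReal.ofReal_add (hL0 _ hs) (hL0 _ ht)]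
  have hσ : ∀ ⦃f : ℕ → Set E⦄, (∀ i, MeasurableSet (f i)) → Pairwise (Disjoint on f) →
      ENNReal.ofReal (L (⋃ i, f i)) = ∑' i, ENNReal.ofReal (L (f i)) := fun f hf hdisj =>
    addContent_iUnion_eq_sum_of_tendsto_zero hring m (fun _ _ => ENNReal.ofReal_ne_top)
      (fun T hT hanti hempty => ENNReal.ofReal_zero ▸ ENNReal.tendsto_ofReal
        (tendsto_zero_of_tendstoUniformlyOn_measureReal hL hT hanti hempty))
      hf (.iUnion hf) hdisj
  refine ⟨Measure.ofMeasurable (fun s _ => ENNReal.ofReal (L s)) (by simp [hLempty]) hσ, ⟨?_⟩,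
    fun s hs => ?_⟩
  · rw [Measure.ofMeasurable_apply _ .univ, hLuniv, ENNReal.ofReal_one]
  · rw [measureReal_def, Measure.ofMeasurable_apply s hs, ENNReal.toReal_ofReal (hL0 s hs)]

lemma tendsto_tvDist_of_tendstoUniformlyOn {μ : ℕ → Measure E} {π : Measure E}
    (hμ : TendstoUniformlyOn (fun n s => (μ n).real s) (fun s => π.real s) atTop
      {s | MeasurableSet s}) :
    Tendsto (fun n => tvDist (μ n) π) atTop (𝓝 0) := by
  refine Metric.tendsto_nhds.mpr fun ε hε => ?_
  filter_upwards [Metric.tendstoUniformlyOn_iff.mp hμ (ε / 4) (by positivity)] with n hn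
  have hle : tvDist (μ n) π ≤ 2 * (ε / 4) :=
    tvDist_le_of_forall_abs_measureReal_sub_le fun s hs => by
      rw [abs_sub_comm, ← Real.dist_eq]
      exact (hn s hs).le
  rw [Real.dist_eq, sub_zero, abs_of_nonneg (tvDist_nonneg _ _)]
  linarith

theorem exists_tendsto_tvDist_of_cauchy {μ : ℕ → Measure E} [∀ n, IsProbabilityMeasure (μ n)]
    (hμ : ∀ ε : ℝ, 0 < ε → ∃ N : ℕ, ∀ m ≥ N, ∀ n ≥ N, tvDist (μ m) (μ n) < ε) :
    ∃ π : Measure E, IsProbabilityMeasure π ∧ Tendsto (fun n => tvDist (μ n) π) atTop (𝓝 0) := by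
  obtain ⟨L, hL⟩ := exists_tendstoUniformlyOn_measureReal hμ
  obtain ⟨π, hπ, hπL⟩ := exists_measure_of_tendstoUniformlyOn hL
  exact ⟨π, hπ, tendsto_tvDist_of_tendstoUniformlyOn
    (hL.congr_right fun s hs => (hπL s hs).symm)⟩

end Completeness

section NonlinearChain

variable {E : Type*} [MeasurableSpace E] (P : Measure E → Kernel E E)

lemma isProbabilityMeasure_stepMeasure [∀ μ, IsMarkovKernel (P μ)] (μ : Measure E)
    [IsProbabilityMeasure μ] :
    IsProbabilityMeasure (stepMeasure P μ) :=
  isProbabilityMeasure_bind (Kernel.measurable _).aemeasurable (ae_of_all _ fun _ => inferInstance)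

lemma isProbabilityMeasure_marginal [∀ μ, IsMarkovKernel (P μ)] (μ0 : Measure E)
    [IsProbabilityMeasure μ0] :
    ∀ n, IsProbabilityMeasure (marginal P μ0 n)
  | 0 => ‹_›
  | n + 1 =>
    have := isProbabilityMeasure_marginal μ0 n
    isProbabilityMeasure_stepMeasure P _

lemma isProbabilityMeasure_twoStepKernel [∀ μ, IsMarkovKernel (P μ)] (μ : Measure E) (x : E) :
    IsProbabilityMeasure (twoStepKernel P μ x) :=
  isProbabilityMeasure_bind (Kernel.measurable _).aemeasurable (ae_of_all _ fun _ => inferInstance)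

lemma measurable_twoStepKernel (μ : Measure E) : Measurable (twoStepKernel P μ) :=
  (Measure.measurable_bind' (Kernel.measurable _)).comp (Kernel.measurable _)

lemma stepMeasure_stepMeasure (μ : Measure E) :
    stepMeasure P (stepMeasure P μ) = μ.bind (twoStepKernel P μ) :=
  Measure.bind_bind (Kernel.measurable _).aemeasurable (Kernel.measurable _).aemeasurable

theorem tvDist_stepMeasure_stepMeasure_le [∀ μ, IsMarkovKernel (P μ)] {α₂ lam₂ : ℝ}
    (hα₂1 : α₂ ≤ 1) (hlam₂0 : 0 ≤ lam₂) (hlam₂α : lam₂ ≤ α₂)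
    (C1 : ∀ (μ ν : Measure E), IsProbabilityMeasure μ → IsProbabilityMeasure ν →
      ∀ x y : E, tvDist (twoStepKernel P μ x) (twoStepKernel P ν y) ≤ 2 * (1 - α₂))
    (C2 : ∀ (μ ν : Measure E), IsProbabilityMeasure μ → IsProbabilityMeasure ν →
      ∀ x : E, tvDist (twoStepKernel P μ x) (twoStepKernel P ν x) ≤ lam₂ * tvDist μ ν)
    (μ ν : Measure E) [IsProbabilityMeasure μ] [IsProbabilityMeasure ν] :
    tvDist (stepMeasure P (stepMeasure P μ)) (stepMeasure P (stepMeasure P ν)) ≤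
      tvDist μ ν - α₂ / 2 * tvDist μ ν ^ 2 := by
  have := isProbabilityMeasure_twoStepKernel P μ
  have := isProbabilityMeasure_twoStepKernel P ν
  rw [stepMeasure_stepMeasure, stepMeasure_stepMeasure]
  exact tvDist_bind_le (measurable_twoStepKernel P μ) (measurable_twoStepKernel P ν) hα₂1
    hlam₂0 hlam₂α (C1 μ ν ‹_› ‹_›) (C2 μ ν ‹_› ‹_›)


lemma tvDist_marginal_add_two_mul_le [∀ μ, IsMarkovKernel (P μ)] {α : ℝ} (hα0 : 0 ≤ α)
    (hα1 : α ≤ 1)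
    (hcontr : ∀ μ ν : Measure E, IsProbabilityMeasure μ → IsProbabilityMeasure ν →
      tvDist (stepMeasure P (stepMeasure P μ)) (stepMeasure P (stepMeasure P ν)) ≤
        tvDist μ ν - α / 2 * tvDist μ ν ^ 2)
    (μ0 : Measure E) [IsProbabilityMeasure μ0] (a b k : ℕ) :
    tvDist (marginal P μ0 (a + 2 * k)) (marginal P μ0 (b + 2 * k)) ≤ 2 / (1 + α * k) := by
  have := isProbabilityMeasure_marginal P μ0
  refine le_two_div_of_le_sub_sq (x := fun k => tvDist (marginal P μ0 (a + 2 * k))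
    (marginal P μ0 (b + 2 * k))) hα0 hα1 (tvDist_le_two _ _) (fun k => ?_) k
  exact hcontr _ _ (this _) (this _)

lemma tvDist_marginal_cauchy [∀ μ, IsMarkovKernel (P μ)] {α : ℝ} (hα0 : 0 < α) (hα1 : α ≤ 1)
    (hcontr : ∀ μ ν : Measure E, IsProbabilityMeasure μ → IsProbabilityMeasure ν →
      tvDist (stepMeasure P (stepMeasure P μ)) (stepMeasure P (stepMeasure P ν)) ≤
        tvDist μ ν - α / 2 * tvDist μ ν ^ 2)
    (μ0 : Measure E) [IsProbabilityMeasure μ0] {ε : ℝ} (hε : 0 < ε) :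
    ∃ N : ℕ, ∀ m ≥ N, ∀ n ≥ N, tvDist (marginal P μ0 m) (marginal P μ0 n) < ε := by
  have hlim : Tendsto (fun k : ℕ => 2 / (1 + α * k)) atTop (𝓝 0) :=
    tendsto_const_nhds.div_atTop
      (tendsto_atTop_add_const_left _ 1 (tendsto_natCast_atTop_atTop.const_mul_atTop hα0))
  obtain ⟨K, hK⟩ := eventually_atTop.mp (hlim.eventually (gt_mem_nhds hε))
  refine ⟨2 * K, fun m hm n hn => ?_⟩
  obtain ⟨a, rfl⟩ : ∃ a, m = a + 2 * K := ⟨m - 2 * K, by omega⟩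
  obtain ⟨b, rfl⟩ : ∃ b, n = b + 2 * K := ⟨n - 2 * K, by omega⟩
  exact (tvDist_marginal_add_two_mul_le P hα0.le hα1 hcontr μ0 a b K).trans_lt (hK K le_rfl)

end NonlinearChain

theorem marginals_cauchy_and_converge_general
    {E : Type*} [MeasurableSpace E]
    (P : Measure E → Kernel E E) (hP : ∀ μ, IsMarkovKernel (P μ))
    (α₂ lam₂ : ℝ) (hα₂0 : 0 < α₂) (hα₂1 : α₂ < 1)
    (hlam₂0 : 0 ≤ lam₂) (hlam₂α : lam₂ ≤ α₂)
    (C1 : ∀ (μ ν : Measure E), IsProbabilityMeasure μ → IsProbabilityMeasure ν →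
      ∀ x y : E, tvDist (twoStepKernel P μ x) (twoStepKernel P ν y) ≤ 2 * (1 - α₂))
    (C2 : ∀ (μ ν : Measure E), IsProbabilityMeasure μ → IsProbabilityMeasure ν →
      ∀ x : E, tvDist (twoStepKernel P μ x) (twoStepKernel P ν x) ≤ lam₂ * tvDist μ ν)
    (μ0 : Measure E) (hμ0 : IsProbabilityMeasure μ0) :
    (∀ ε : ℝ, 0 < ε → ∃ N : ℕ, ∀ m ≥ N, ∀ n ≥ N,
        tvDist (marginal P μ0 m) (marginal P μ0 n) < ε) ∧
      ∃ π : Measure E, IsProbabilityMeasure π ∧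
        Filter.Tendsto (fun n => tvDist (marginal P μ0 n) π) Filter.atTop (nhds 0) := by
  have := isProbabilityMeasure_marginal P μ0
  have hcontr := fun μ ν (_ : IsProbabilityMeasure μ) (_ : IsProbabilityMeasure ν) =>
    tvDist_stepMeasure_stepMeasure_le P hα₂1.le hlam₂0 hlam₂α C1 C2 μ ν
  have hcauchy := fun ε (hε : 0 < ε) => tvDist_marginal_cauchy P hα₂0 hα₂1.le hcontr μ0 hε
  exact ⟨hcauchy, exists_tendsto_tvDist_of_cauchy hcauchy⟩

/-- under (C1), (C2), (C3) the sequence of marginals `(μ_n)` is Cauchy in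
total variation, and there exists `π ∈ 𝒫(E)` with `‖μ_n − π‖_TV → 0`. -/
theorem marginals_cauchy_and_converge
    {E : Type*} [MeasurableSpace E] [Nonempty E]
    (P : Measure E → Kernel E E) (hP : ∀ μ, IsMarkovKernel (P μ))
    (α₂ lam₁ lam₂ : ℝ) (hα₂0 : 0 < α₂) (hα₂1 : α₂ < 1)
    (hlam₂0 : 0 ≤ lam₂) (hlam₂α : lam₂ ≤ α₂) (hlam₁0 : 0 ≤ lam₁)
    (C1 : ∀ (μ ν : Measure E), IsProbabilityMeasure μ → IsProbabilityMeasure ν →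
      ∀ x y : E, tvDist (twoStepKernel P μ x) (twoStepKernel P ν y) ≤ 2 * (1 - α₂))
    (C2 : ∀ (μ ν : Measure E), IsProbabilityMeasure μ → IsProbabilityMeasure ν →
      ∀ x : E, tvDist (twoStepKernel P μ x) (twoStepKernel P ν x) ≤ lam₂ * tvDist μ ν)
    (C3 : ∀ (μ ν : Measure E), IsProbabilityMeasure μ → IsProbabilityMeasure ν →
      ∀ x : E, tvDist (P μ x) (P ν x) ≤ lam₁ * tvDist μ ν)
    (μ0 : Measure E) (hμ0 : IsProbabilityMeasure μ0) :
    (∀ ε : ℝ, 0 < ε → ∃ N : ℕ, ∀ m ≥ N, ∀ n ≥ N,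
        tvDist (marginal P μ0 m) (marginal P μ0 n) < ε) ∧
      ∃ π : Measure E, IsProbabilityMeasure π ∧
        Filter.Tendsto (fun n => tvDist (marginal P μ0 n) π) Filter.atTop (nhds 0) :=
  marginals_cauchy_and_converge_general P hP α₂ lam₂ hα₂0 hα₂1 hlam₂0 hlam₂α C1 C2 μ0 hμ0
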